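/- Let K, T ⊂ ℝⁿ be centrally symmetric convex bodies which are 2-convex with constants γ_K > 0 and γ_T > 0 respectively. Define their 2-Firey intersection K ∩₂ T = {x ∈ ℝⁿ : ‖x‖_K² + ‖x‖_T² ≤ 1}. Then K ∩₂ T is a centrally symmetric convex body which is 2-convex with constant min(γ_K, γ_T)/8. -/

import Mathlib

open MeasureTheory
open scoped RealInnerProductSpace

noncomputable section

/-- A centrally symmetric convex body: compact, convex, with nonempty interior,
and symmetric about the origin. -/
def IsSymmConvexBody {E : Type*} [NormedAddCommGroup E] [NormedSpace ℝ E]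
    (K : Set E) : Prop :=
  IsCompact K ∧ Convex ℝ K ∧ (interior K).Nonempty ∧ K = -K

/-- The modulus of convexity of `K`, defined via the gauge (Minkowski functional) of `K`. -/
def modulusOfConvexity {E : Type*} [AddCommGroup E] [Module ℝ E]
    (K : Set E) (ε : ℝ) : ℝ :=
  sInf { d | ∃ x y : E, gauge K x ≤ 1 ∧ gauge K y ≤ 1 ∧ ε ≤ gauge K (x - y) ∧
    d = 1 - gauge K ((2:ℝ)⁻¹ • (x + y)) }

/-- `K` is 2-convex with constant `α`: `δ_K(ε) ≥ α ε²` for all `0 < ε ≤ 2`. -/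
def IsTwoConvex {E : Type*} [AddCommGroup E] [Module ℝ E]
    (K : Set E) (α : ℝ) : Prop :=
  ∀ ε : ℝ, 0 < ε → ε ≤ 2 → α * ε ^ 2 ≤ modulusOfConvexity K ε

/-- The 2-Firey intersection `K ∩₂ T = {x : ‖x‖_K² + ‖x‖_T² ≤ 1}`. -/
def fireyIntersection {E : Type*} [AddCommGroup E] [Module ℝ E]
    (K T : Set E) : Set E :=
  { x | gauge K x ^ 2 + gauge T x ^ 2 ≤ 1 }

/-!
Let `a ≥ b > 0` be the gauges of `u` and `v`, and `w = (a/b) v`, of gauge `a`. Two-convexity at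
scale `a`, applied to `u` and `w`, bounds the gauge of their midpoint; since `(u+v)/2` is a convex
combination of `(u+w)/2` and `u`, this gives `a² ‖(u+v)/2‖ ≤ a²(a+b)/2 - γ b (t-(a-b))²` with
`t = ‖u-v‖`, and an elementary polynomial estimate turns it into the quadratic inequality
`‖(u+v)/2‖² ≤ (a²+b²)/2 - (γ/4) t²`. Summing this for `K` and `T` bounds the square of the gauge
of `K ∩₂ T`, which is `√(‖·‖_K² + ‖·‖_T²)`, and `√(1 - 2c) ≤ 1 - c` finishes.
-/

open Set Filter Topology

lemma quartic_nonneg_of_le_two_mul {a b y : ℝ} (hb : 0 < b) (hba : b ≤ a) (hy0 : 0 ≤ y)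
    (hy2 : y ≤ 2 * b) :
    0 ≤ 4 * a ^ 4 * (a - b) ^ 2 + 4 * a ^ 2 * b * (a + b) * y ^ 2 - a ^ 4 * ((a - b) + y) ^ 2
      - b ^ 2 * y ^ 4 := by
  have ha : 0 < a := hb.trans_le hba
  have hy4 : b ^ 2 * y ^ 4 ≤ 4 * a ^ 2 * b ^ 2 * y ^ 2 := by
    nlinarith [mul_nonneg (mul_nonneg (sq_nonneg b) (sq_nonneg y))
      (mul_nonneg (by linarith : (0:ℝ) ≤ 2 * a - y) (by linarith : (0:ℝ) ≤ 2 * a + y))]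
  have hab : 4 * a ^ 2 * b ^ 2 * y ^ 2 ≤ 4 * a ^ 2 * b * (a + b) * y ^ 2 := by
    nlinarith [mul_nonneg (mul_nonneg (pow_nonneg ha.le 3) hb.le) (sq_nonneg y)]
  rcases le_total y (a - b) with h | h
  · have : 0 ≤ a ^ 4 * ((a - b) - y) * (3 * (a - b) + y) :=
      mul_nonneg (mul_nonneg (by positivity) (by linarith)) (by linarith)
    nlinarith
  · have key : a * ((y - (a - b)) * (3 * (a - b) + y)) ≤ 4 * b * y ^ 2 := by
      nlinarith [sq_nonneg (y - 3 * (a - b)),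
        mul_nonneg (sub_nonneg.2 h) (by linarith : (0:ℝ) ≤ 3 * (a - b) + y), sq_nonneg y]
    nlinarith [mul_le_mul_of_nonneg_left key (by positivity : (0:ℝ) ≤ a ^ 3)]

lemma sq_le_of_sq_mul_le {a b y γ M : ℝ} (hb : 0 < b) (hba : b ≤ a) (hy0 : 0 ≤ y)
    (hy2 : y ≤ 2 * b) (hγ : 0 ≤ γ) (hγ4 : γ ≤ 1 / 4) (hM : 0 ≤ M)
    (h : a ^ 2 * M ≤ a ^ 2 * (a + b) / 2 - γ * b * y ^ 2) :
    M ^ 2 ≤ (a ^ 2 + b ^ 2) / 2 - γ / 4 * ((a - b) + y) ^ 2 := by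
  have ha : 0 < a := hb.trans_le hba
  have hsq : (a ^ 2 * M) ^ 2 ≤ (a ^ 2 * (a + b) / 2 - γ * b * y ^ 2) ^ 2 :=
    pow_le_pow_left₀ (by positivity) h 2
  have hpoly : (a ^ 2 * (a + b) / 2 - γ * b * y ^ 2) ^ 2
      ≤ a ^ 4 * ((a ^ 2 + b ^ 2) / 2 - γ / 4 * ((a - b) + y) ^ 2) := by
    nlinarith [mul_nonneg (mul_nonneg hγ (by linarith : (0:ℝ) ≤ 1 / 4 - γ))
        (mul_nonneg (sq_nonneg b) (sq_nonneg (y ^ 2))),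
      mul_nonneg (by linarith : (0:ℝ) ≤ 1 - 4 * γ)
        (mul_nonneg (pow_nonneg ha.le 4) (sq_nonneg (a - b))),
      mul_nonneg hγ (quartic_nonneg_of_le_two_mul hb hba hy0 hy2)]
  exact le_of_mul_le_mul_left (by nlinarith) (by positivity : (0:ℝ) < a ^ 4)

section RealVectorSpace

variable {E : Type*} [AddCommGroup E] [Module ℝ E]

lemma gauge_setOf_le_one {f : E → ℝ} (hf₀ : ∀ x, 0 ≤ f x)
    (hf : ∀ (c : ℝ) (x : E), 0 ≤ c → f (c • x) = c * f x) (x : E) :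
    gauge {y | f y ≤ 1} x = f x := by
  have hset : {r ∈ Ioi (0:ℝ) | r⁻¹ • x ∈ {y | f y ≤ 1}} = Ioi 0 ∩ Ici (f x) := by
    ext r
    simp only [mem_Ioi, mem_inter_iff, mem_Ici]
    change 0 < r ∧ f (r⁻¹ • x) ≤ 1 ↔ _
    refine and_congr_right fun hr => ?_
    rw [hf _ _ (inv_nonneg.2 hr.le), inv_mul_le_iff₀ hr, mul_one]
  rw [gauge_def', hset]
  rcases (hf₀ x).eq_or_lt with h | h
  · rw [← h, inter_eq_left.2 Ioi_subset_Ici_self, csInf_Ioi]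
  · rw [inter_eq_right.2 (Ici_subset_Ioi.2 h), csInf_Ici]

lemma gauge_fireyIntersection (K T : Set E) (x : E) :
    gauge (fireyIntersection K T) x = √(gauge K x ^ 2 + gauge T x ^ 2) := by
  have hF : fireyIntersection K T = {y | √(gauge K y ^ 2 + gauge T y ^ 2) ≤ 1} := by
    ext y
    simp [fireyIntersection, Real.sqrt_le_left zero_le_one]
  rw [hF, gauge_setOf_le_one (fun _ => Real.sqrt_nonneg _)]
  intro c y hc
  rw [gauge_smul_of_nonneg hc, gauge_smul_of_nonneg hc, smul_eq_mul, smul_eq_mul, mul_pow,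
    mul_pow, ← mul_add, Real.sqrt_mul (sq_nonneg c), Real.sqrt_sq hc]

lemma IsTwoConvex.mono {K : Set E} {α β : ℝ} (h : IsTwoConvex K α) (hβα : β ≤ α) :
    IsTwoConvex K β :=
  fun ε hε0 hε2 => (mul_le_mul_of_nonneg_right hβα (sq_nonneg ε)).trans (h ε hε0 hε2)

lemma IsTwoConvex.nontrivial {K : Set E} {γ : ℝ} (h : IsTwoConvex K γ) (hγ : 0 < γ) :
    Nontrivial E := by
  by_contra hE
  have : Subsingleton E := not_nontrivial_iff_subsingleton.1 hE
  have hδ : modulusOfConvexity K 1 ≤ 0 := by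
    refine Real.sInf_nonpos ?_
    rintro d ⟨x, y, -, -, hxy, -⟩
    rw [Subsingleton.elim (x - y) 0, gauge_zero] at hxy
    linarith
  linarith [h 1 one_pos one_le_two]

end RealVectorSpace

variable {E : Type*} [NormedAddCommGroup E] [NormedSpace ℝ E] {K T : Set E}

namespace IsSymmConvexBody

lemma neg_mem (hK : IsSymmConvexBody K) {x : E} (hx : x ∈ K) : -x ∈ K := by
  rw [hK.2.2.2] at hx
  exact hx

lemma mem_nhds_zero (hK : IsSymmConvexBody K) : K ∈ 𝓝 (0 : E) := by
  obtain ⟨z, hz⟩ := hK.2.2.1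
  have h := hK.2.1.combo_interior_self_mem_interior hz (hK.neg_mem (interior_subset hz))
    (by norm_num : (0:ℝ) < 1 / 2) (by norm_num : (0:ℝ) ≤ 1 / 2) (by norm_num)
  rw [smul_neg, add_neg_cancel] at h
  exact mem_interior_iff_mem_nhds.1 h

lemma absorbent (hK : IsSymmConvexBody K) : Absorbent ℝ K :=
  absorbent_nhds_zero hK.mem_nhds_zero

lemma gauge_pos (hK : IsSymmConvexBody K) {x : E} : 0 < gauge K x ↔ x ≠ 0 :=
  _root_.gauge_pos hK.absorbent ((NormedSpace.isVonNBounded_iff ℝ).2 hK.1.isBounded)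

lemma gauge_neg (hK : IsSymmConvexBody K) (x : E) : gauge K (-x) = gauge K x :=
  _root_.gauge_neg (fun _ => hK.neg_mem) x

lemma gauge_add_le (hK : IsSymmConvexBody K) (x y : E) :
    gauge K (x + y) ≤ gauge K x + gauge K y :=
  _root_.gauge_add_le hK.2.1 hK.absorbent x y

lemma gauge_sub_le (hK : IsSymmConvexBody K) (x y : E) :
    gauge K (x - y) ≤ gauge K x + gauge K y := by
  simpa only [sub_eq_add_neg, hK.gauge_neg] using hK.gauge_add_le x (-y)

lemma sub_le_gauge_sub (hK : IsSymmConvexBody K) (x y : E) :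
    gauge K x - gauge K y ≤ gauge K (x - y) := by
  simpa using hK.gauge_add_le (x - y) y

lemma gauge_midpoint_le (hK : IsSymmConvexBody K) (x y : E) :
    gauge K ((2:ℝ)⁻¹ • (x + y)) ≤ (gauge K x + gauge K y) / 2 := by
  rw [gauge_smul_of_nonneg (by norm_num), smul_eq_mul]
  linarith [hK.gauge_add_le x y]

lemma gauge_le_one_iff (hK : IsSymmConvexBody K) {x : E} : gauge K x ≤ 1 ↔ x ∈ K := by
  rw [gauge_le_one_iff_mem_closure hK.2.1 hK.mem_nhds_zero, hK.1.isClosed.closure_eq]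

lemma continuous_gauge (hK : IsSymmConvexBody K) : Continuous (gauge K) :=
  _root_.continuous_gauge hK.2.1 hK.mem_nhds_zero

lemma exists_gauge_eq_one [Nontrivial E] (hK : IsSymmConvexBody K) : ∃ x, gauge K x = 1 := by
  obtain ⟨x, hx⟩ := exists_ne (0 : E)
  have hpos : 0 < gauge K x := hK.gauge_pos.2 hx
  refine ⟨(gauge K x)⁻¹ • x, ?_⟩
  rw [gauge_smul_of_nonneg (inv_nonneg.2 hpos.le), smul_eq_mul, inv_mul_cancel₀ hpos.ne']

lemma modulusOfConvexity_le (hK : IsSymmConvexBody K) {ε : ℝ} {x y : E} (hx : gauge K x ≤ 1)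
    (hy : gauge K y ≤ 1) (hε : ε ≤ gauge K (x - y)) :
    modulusOfConvexity K ε ≤ 1 - gauge K ((2:ℝ)⁻¹ • (x + y)) := by
  refine csInf_le ⟨0, ?_⟩ ⟨x, y, hx, hy, hε, rfl⟩
  rintro d ⟨x', y', hx', hy', -, rfl⟩
  linarith [hK.gauge_midpoint_le x' y']

lemma le_modulusOfConvexity [Nontrivial E] (hK : IsSymmConvexBody K) {ε c : ℝ} (hε : ε ≤ 2)
    (h : ∀ x y : E, gauge K x ≤ 1 → gauge K y ≤ 1 → ε ≤ gauge K (x - y) →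
      c ≤ 1 - gauge K ((2:ℝ)⁻¹ • (x + y))) :
    c ≤ modulusOfConvexity K ε := by
  obtain ⟨x, hx⟩ := hK.exists_gauge_eq_one
  have hdiam : gauge K (x - -x) = 2 := by
    rw [sub_neg_eq_add, ← two_smul ℝ, gauge_smul_of_nonneg zero_le_two, hx, smul_eq_mul, mul_one]
  refine le_csInf ⟨_, x, -x, hx.le, (hK.gauge_neg x).trans hx |>.le, hdiam ▸ hε, rfl⟩ ?_
  rintro d ⟨x, y, hx, hy, hxy, rfl⟩
  exact h x y hx hy hxy

lemma convexOn_sq_gauge (hK : IsSymmConvexBody K) : ConvexOn ℝ univ fun x => gauge K x ^ 2 :=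
  (gaugeSeminorm ((balanced_iff_neg_mem hK.2.1).2 fun _ => hK.neg_mem) hK.2.1
    hK.absorbent).convexOn.pow (fun _ _ => gauge_nonneg _) 2

lemma fireyIntersection (hK : IsSymmConvexBody K) (hT : IsSymmConvexBody T) :
    IsSymmConvexBody (fireyIntersection K T) := by
  have hcont : Continuous fun x => gauge K x ^ 2 + gauge T x ^ 2 :=
    (hK.continuous_gauge.pow 2).add (hT.continuous_gauge.pow 2)
  have hsub : _root_.fireyIntersection K T ⊆ K := fun x hx =>
    hK.gauge_le_one_iff.1 (by nlinarith [gauge_nonneg (s := K) x, hx.out, sq_nonneg (gauge T x)])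
  refine ⟨hK.1.of_isClosed_subset (isClosed_le hcont continuous_const) hsub, ?_, ⟨0, ?_⟩, ?_⟩
  · simpa [_root_.fireyIntersection] using
      (hK.convexOn_sq_gauge.add hT.convexOn_sq_gauge).convex_le 1
  · refine mem_interior_iff_mem_nhds.2 (mem_of_superset ?_
      fun x (hx : gauge K x ^ 2 + gauge T x ^ 2 < 1) => hx.le)
    exact (isOpen_lt hcont continuous_const).mem_nhds (by simp)
  · ext x
    simp [_root_.fireyIntersection, hK.gauge_neg, hT.gauge_neg]

end IsSymmConvexBody

namespace IsTwoConvex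

variable {γ : ℝ}

lemma gauge_midpoint_le_one_sub (h : IsTwoConvex K γ) (hK : IsSymmConvexBody K) {x y : E}
    (hx : gauge K x ≤ 1) (hy : gauge K y ≤ 1) :
    gauge K ((2:ℝ)⁻¹ • (x + y)) ≤ 1 - γ * gauge K (x - y) ^ 2 := by
  rcases (gauge_nonneg (x - y)).eq_or_lt with h0 | hpos
  · rw [← h0]
    linarith [hK.gauge_midpoint_le x y]
  · have hle : gauge K (x - y) ≤ 2 := by linarith [hK.gauge_sub_le x y]
    linarith [h _ hpos hle, hK.modulusOfConvexity_le hx hy le_rfl]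

lemma le_quarter [Nontrivial E] (h : IsTwoConvex K γ) (hK : IsSymmConvexBody K) : γ ≤ 1 / 4 := by
  obtain ⟨x, hx⟩ := hK.exists_gauge_eq_one
  have := h.gauge_midpoint_le_one_sub hK hx.le ((hK.gauge_neg x).trans hx).le
  rw [add_neg_cancel, smul_zero, gauge_zero, sub_neg_eq_add, ← two_smul ℝ,
    gauge_smul_of_nonneg zero_le_two, hx, smul_eq_mul] at this
  linarith

lemma mul_gauge_midpoint_le (h : IsTwoConvex K γ) (hK : IsSymmConvexBody K) {R : ℝ} (hR : 0 < R)
    {u v : E} (hu : gauge K u ≤ R) (hv : gauge K v ≤ R) :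
    R * gauge K ((2:ℝ)⁻¹ • (u + v)) ≤ R ^ 2 - γ * gauge K (u - v) ^ 2 := by
  have hR' : 0 ≤ R⁻¹ := inv_nonneg.2 hR.le
  have hscale : ∀ {z : E}, gauge K z ≤ R → gauge K (R⁻¹ • z) ≤ 1 := fun hz => by
    rwa [gauge_smul_of_nonneg hR', smul_eq_mul, inv_mul_le_iff₀ hR, mul_one]
  have := h.gauge_midpoint_le_one_sub hK (hscale hu) (hscale hv)
  rw [← smul_add, smul_comm, ← smul_sub, gauge_smul_of_nonneg hR', gauge_smul_of_nonneg hR',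
    smul_eq_mul, smul_eq_mul] at this
  have hmul := mul_le_mul_of_nonneg_left this (sq_nonneg R)
  field_simp at hmul
  nlinarith

lemma sq_mul_gauge_midpoint_le (h : IsTwoConvex K γ) (hK : IsSymmConvexBody K) (hγ : 0 ≤ γ)
    {u v : E} (hv : 0 < gauge K v) (hvu : gauge K v ≤ gauge K u) :
    gauge K u ^ 2 * gauge K ((2:ℝ)⁻¹ • (u + v)) ≤
      gauge K u ^ 2 * (gauge K u + gauge K v) / 2
        - γ * gauge K v * (gauge K (u - v) - (gauge K u - gauge K v)) ^ 2 := by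
  set a := gauge K u
  set b := gauge K v
  have ha : 0 < a := hv.trans_le hvu
  set w : E := (a / b) • v with hw
  have hgw : gauge K w = a := by
    rw [gauge_smul_of_nonneg (by positivity), smul_eq_mul, div_mul_cancel₀ _ hv.ne']
  have hwv : gauge K (w - v) = a - b := by
    rw [show w - v = (a / b - 1) • v by rw [hw, sub_smul, one_smul],
      gauge_smul_of_nonneg (sub_nonneg.2 ((one_le_div hv).2 hvu)), smul_eq_mul, sub_mul,
      div_mul_cancel₀ _ hv.ne', one_mul]
  have hy : gauge K (u - v) - (a - b) ≤ gauge K (u - w) := by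
    have := hK.gauge_add_le (u - w) (w - v)
    rw [sub_add_sub_cancel, hwv] at this
    linarith
  have hp := h.mul_gauge_midpoint_le hK ha le_rfl hgw.le
  set gp := gauge K ((2:ℝ)⁻¹ • (u + w))
  have hdec : (2:ℝ)⁻¹ • (u + v) = (b / a) • ((2:ℝ)⁻¹ • (u + w)) + ((a - b) / (2 * a)) • u := by
    rw [hw]
    match_scalars
    · field_simp
      ring
    · field_simp
  have hM : gauge K ((2:ℝ)⁻¹ • (u + v)) ≤ b / a * gp + (a - b) / (2 * a) * a := by
    rw [hdec]
    refine (hK.gauge_add_le _ _).trans_eq ?_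
    rw [gauge_smul_of_nonneg (by positivity), gauge_smul_of_nonneg
      (div_nonneg (sub_nonneg.2 hvu) (by positivity)), smul_eq_mul, smul_eq_mul]
  have hM' : a ^ 2 * gauge K ((2:ℝ)⁻¹ • (u + v)) ≤ b * (a * gp) + a ^ 2 * (a - b) / 2 :=
    calc a ^ 2 * gauge K ((2:ℝ)⁻¹ • (u + v))
        ≤ a ^ 2 * (b / a * gp + (a - b) / (2 * a) * a) :=
          mul_le_mul_of_nonneg_left hM (sq_nonneg a)
      _ = b * (a * gp) + a ^ 2 * (a - b) / 2 := by field_simp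
  have hy2 : (gauge K (u - v) - (a - b)) ^ 2 ≤ gauge K (u - w) ^ 2 :=
    pow_le_pow_left₀ (by linarith [hK.sub_le_gauge_sub u v]) hy 2
  nlinarith [mul_le_mul_of_nonneg_left hp hv.le,
    mul_le_mul_of_nonneg_left hy2 (mul_nonneg hγ hv.le)]

lemma sq_gauge_midpoint_le [Nontrivial E] (h : IsTwoConvex K γ) (hK : IsSymmConvexBody K)
    (hγ : 0 ≤ γ) (u v : E) :
    gauge K ((2:ℝ)⁻¹ • (u + v)) ^ 2 ≤
      (gauge K u ^ 2 + gauge K v ^ 2) / 2 - γ / 4 * gauge K (u - v) ^ 2 := by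
  wlog hvu : gauge K v ≤ gauge K u generalizing u v
  · have := this v u (le_of_not_ge hvu)
    rwa [add_comm v, ← neg_sub u v, hK.gauge_neg, add_comm (gauge K v ^ 2)] at this
  have hγ4 := h.le_quarter hK
  rcases (gauge_nonneg v).eq_or_lt with hv0 | hv
  · obtain rfl : v = 0 := not_not.1 fun hne => (hK.gauge_pos.2 hne).ne' hv0.symm
    rw [add_zero, sub_zero, gauge_smul_of_nonneg (by norm_num), smul_eq_mul, gauge_zero]
    nlinarith [sq_nonneg (gauge K u)]
  · have hy0 := hK.sub_le_gauge_sub u v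
    have hy2 := hK.gauge_sub_le u v
    have := sq_le_of_sq_mul_le hv hvu (by linarith) (by linarith) hγ hγ4 (gauge_nonneg _)
      (h.sq_mul_gauge_midpoint_le hK hγ hv hvu)
    convert this using 4
    ring

end IsTwoConvex

lemma IsTwoConvex.fireyIntersection {γ : ℝ} (h2K : IsTwoConvex K γ) (h2T : IsTwoConvex T γ)
    (hK : IsSymmConvexBody K) (hT : IsSymmConvexBody T) (hγ : 0 < γ) :
    IsTwoConvex (fireyIntersection K T) (γ / 8) := by
  have := h2K.nontrivial hγ
  intro ε hε0 hε2
  refine (hK.fireyIntersection hT).le_modulusOfConvexity hε2 fun x y hx hy hxy => ?_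
  rw [gauge_fireyIntersection, Real.sqrt_le_left zero_le_one] at hx hy
  rw [gauge_fireyIntersection, Real.le_sqrt hε0.le (by positivity)] at hxy
  have hKxy := h2K.sq_gauge_midpoint_le hK hγ.le x y
  have hTxy := h2T.sq_gauge_midpoint_le hT hγ.le x y
  have hγ4 := h2K.le_quarter hK
  rw [gauge_fireyIntersection, le_sub_comm, Real.sqrt_le_left (by nlinarith)]
  nlinarith [mul_le_mul_of_nonneg_left hxy hγ.le, sq_nonneg (γ * ε ^ 2)]

theorem twoConvex_fireyIntersection {n : ℕ}
    (K T : Set (EuclideanSpace ℝ (Fin n))) (γK γT : ℝ)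
    (hK : IsSymmConvexBody K) (hT : IsSymmConvexBody T)
    (hγK : 0 < γK) (hγT : 0 < γT)
    (h2K : IsTwoConvex K γK) (h2T : IsTwoConvex T γT) :
    IsSymmConvexBody (fireyIntersection K T) ∧
    IsTwoConvex (fireyIntersection K T) (min γK γT / 8) :=
  ⟨hK.fireyIntersection hT, (h2K.mono (min_le_left γK γT)).fireyIntersection
    (h2T.mono (min_le_right γK γT)) hK hT (lt_min hγK hγT)⟩
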